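/- arXiv:1202.3907 — 2 statements merged into one kernel-verified Lean document; each statement's English description precedes it below -/
import Mathlib

section
/- For all integers k ≥ 2, 2 ≤ j ≤ k, and every p with 0 ≤ p < p̃, the iterates g_p^{∘n}(p) tend to zero at least exponentially fast: there exist a constant C > 0 and λ ∈ (0,1) such that g_p^{∘n}(p) ≤ C · λ^n for all n ≥ 0. -/
open scoped Classical

noncomputable section

/-- The bootstrap recursion map `g_p(x) = p·∑_{i=k-j+1}^{k} C(k,i) xⁱ (1-x)^{k-i}`. -/
def g (k j : ℕ) (p x : ℝ) : ℝ :=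
  p * ∑ i ∈ Finset.Icc (k - j + 1) k, (Nat.choose k i : ℝ) * x ^ i * (1 - x) ^ (k - i)

/-- The critical threshold `p̃`: the supremum of the densities `p ∈ [0,1]` for which
`x = 0` is the unique fixed point of `g_p` in `[0,1]`. -/
def ptilde (k j : ℕ) : ℝ :=
  sSup {p : ℝ | p ∈ Set.Icc (0 : ℝ) 1 ∧ ∀ x ∈ Set.Icc (0 : ℝ) 1, g k j p x = x → x = 0}

/-!
Since `p < p̃`, some `q ∈ (p, 1]` has `0` as the only fixed point of `g_q` on `[0,1]`. As
`g_q(1) = q ≤ 1`, the intermediate value theorem forces `g_q(x) ≤ x` on `[0,1]`. The map is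
linear in `p`, so `g_p = (p/q) g_q ≤ (p/q) x` there, and the iterates decay like `(p/q)ⁿ`.
-/

open Set

theorem le_self_of_forall_isFixedPt_eq {f : ℝ → ℝ} {a b : ℝ} (hf : ContinuousOn f (Icc a b))
    (hb : f b ≤ b) (hfix : ∀ x ∈ Icc a b, f x = x → x = a) : ∀ x ∈ Icc a b, f x ≤ x := by
  intro x hx
  by_contra! hlt
  have hzero : (0 : ℝ) ∈ Icc (x - f x) (b - f b) := ⟨by linarith, by linarith⟩
  obtain ⟨c, hc, hfc⟩ := intermediate_value_Icc hx.2
    ((continuous_id.continuousOn.sub hf).mono (Icc_subset_Icc_left hx.1)) hzero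
  have hfc : f c = c := by simp only [Pi.sub_apply, id_eq] at hfc; linarith
  have hxc : x = c := le_antisymm hc.1 (hfix c ⟨hx.1.trans hc.1, hc.2⟩ hfc ▸ hx.1)
  exact hlt.ne' (hxc ▸ hfc)

theorem iterate_le_pow_mul {α : Type*} [Semiring α] [PartialOrder α] [IsOrderedRing α]
    {f : α → α} {s : Set α} {c : α} (hc : 0 ≤ c) (hmaps : MapsTo f s s)
    (hle : ∀ x ∈ s, f x ≤ c * x) (n : ℕ) {x : α} (hx : x ∈ s) : f^[n] x ≤ c ^ n * x := by
  induction n with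
  | zero => simp
  | succ n ih =>
    rw [Function.iterate_succ_apply', pow_succ', mul_assoc]
    exact (hle _ (hmaps.iterate n hx)).trans (mul_le_mul_of_nonneg_left ih hc)

section BootstrapMap

variable {k j : ℕ}

theorem g_mul_left (a p x : ℝ) : g k j (a * p) x = a * g k j p x := by
  simp only [g, mul_assoc]

theorem g_zero_left (x : ℝ) : g k j 0 x = 0 := by
  simp [g]

theorem g_one_right (p : ℝ) (hj : 1 ≤ j) (hjk : j ≤ k) : g k j p 1 = p := by
  rw [g, Finset.sum_eq_single_of_mem k (Finset.mem_Icc.2 ⟨by omega, le_rfl⟩)]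
  · simp
  · intro i hi hik
    have : k - i ≠ 0 := by rw [Finset.mem_Icc] at hi; omega
    simp [zero_pow this]

theorem g_nonneg {p x : ℝ} (hp : 0 ≤ p) (hx : x ∈ Icc (0 : ℝ) 1) : 0 ≤ g k j p x := by
  obtain ⟨hx0, hx1⟩ := hx
  have : 0 ≤ 1 - x := sub_nonneg.2 hx1
  unfold g
  positivity

theorem continuous_g (p : ℝ) : Continuous (g k j p) := by
  unfold g
  fun_prop

theorem exists_gt_of_lt_ptilde {p : ℝ} (hp : p < ptilde k j) :
    ∃ q ∈ Icc (0 : ℝ) 1, (∀ x ∈ Icc (0 : ℝ) 1, g k j q x = x → x = 0) ∧ p < q := by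
  have hne : {q : ℝ | q ∈ Icc (0 : ℝ) 1 ∧ ∀ x ∈ Icc (0 : ℝ) 1, g k j q x = x → x = 0}.Nonempty :=
    ⟨0, ⟨le_rfl, zero_le_one⟩, fun x _ hx => by rw [← hx, g_zero_left]⟩
  obtain ⟨q, ⟨hq, hfix⟩, hpq⟩ := exists_lt_of_lt_csSup hne hp
  exact ⟨q, hq, hfix, hpq⟩

theorem g_le_self_of_forall_isFixedPt_eq {q : ℝ} (hj : 1 ≤ j) (hjk : j ≤ k) (hq : q ≤ 1)
    (hfix : ∀ x ∈ Icc (0 : ℝ) 1, g k j q x = x → x = 0) : ∀ x ∈ Icc (0 : ℝ) 1, g k j q x ≤ x :=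
  le_self_of_forall_isFixedPt_eq (continuous_g q).continuousOn
    (by rwa [g_one_right q hj hjk]) hfix

theorem g_le_div_mul_self {p q : ℝ} (hp : 0 ≤ p) (hq : 0 < q)
    (hle : ∀ x ∈ Icc (0 : ℝ) 1, g k j q x ≤ x) : ∀ x ∈ Icc (0 : ℝ) 1, g k j p x ≤ p / q * x := by
  intro x hx
  calc g k j p x = p / q * g k j q x := by rw [← g_mul_left, div_mul_cancel₀ p hq.ne']
    _ ≤ p / q * x := mul_le_mul_of_nonneg_left (hle x hx) (by positivity)

end BootstrapMap

theorem iterates_exponential_decay_general (k j : ℕ) (p : ℝ) (hj : 2 ≤ j) (hjk : j ≤ k)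
    (hp0 : 0 ≤ p) (hp : p < ptilde k j) :
    ∃ C > (0 : ℝ), ∃ lam ∈ Set.Ioo (0 : ℝ) 1, ∀ n : ℕ, (g k j p)^[n] p ≤ C * lam ^ n := by
  obtain ⟨q, hq, hfix, hpq⟩ := exists_gt_of_lt_ptilde hp
  have hq0 : 0 < q := hp0.trans_lt hpq
  have hp1 : p ≤ 1 := (hpq.trans_le hq.2).le
  set lam := p / q
  have hlam0 : 0 ≤ lam := by positivity
  have hlam1 : lam < 1 := (div_lt_one hq0).2 hpq
  have hle := g_le_div_mul_self hp0 hq0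
    (g_le_self_of_forall_isFixedPt_eq (by omega) hjk hq.2 hfix)
  have hmaps : MapsTo (g k j p) (Icc 0 1) (Icc 0 1) := fun x hx =>
    ⟨g_nonneg hp0 hx, ((hle x hx).trans (mul_le_of_le_one_left hx.1 hlam1.le)).trans hx.2⟩
  -- `lam` vanishes when `p = 0`, hence the `max`.
  refine ⟨1, one_pos, max lam (1 / 2), ⟨by positivity, max_lt hlam1 (by norm_num)⟩, fun n => ?_⟩
  calc (g k j p)^[n] p ≤ lam ^ n * p := iterate_le_pow_mul hlam0 hmaps hle n ⟨hp0, hp1⟩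
    _ ≤ lam ^ n := mul_le_of_le_one_right (by positivity) hp1
    _ ≤ 1 * max lam (1 / 2) ^ n := by
      rw [one_mul]
      exact pow_le_pow_left₀ hlam0 (le_max_left _ _) n

theorem iterates_exponential_decay (k j : ℕ) (p : ℝ) (hk : 2 ≤ k) (hj : 2 ≤ j) (hjk : j ≤ k)
    (hp0 : 0 ≤ p) (hp : p < ptilde k j) :
    ∃ C > (0 : ℝ), ∃ lam ∈ Set.Ioo (0 : ℝ) 1, ∀ n : ℕ, (g k j p)^[n] p ≤ C * lam ^ n :=
  iterates_exponential_decay_general k j p hj hjk hp0 hp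
end
end

section
/- Let k ≥ 2 and 2 ≤ j ≤ k, and let 0 < p < 1. Then there exists c > 0 such that for all L ≥ 1 the spectral gap of the oriented FA-jf model on the depth-L rooted k-ary tree with unconstrained leaves satisfies gap_L ≥ e^{-cL}, where gap_L = inf{ D_L(f)/Var_μ(f) : f : Ω_L → ℝ nonconstant } and D_L(f) = ∑_{x ∈ V_L} μ( c̄_x · Var_x(f) ). -/
open scoped Classical

noncomputable section

section Bernoulli

variable {V : Type*} [Fintype V] [DecidableEq V]

/-- Bernoulli(p) product weight of a configuration (`true` = occupied, with probability `p`). -/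
def wt (p : ℝ) (η : V → Bool) : ℝ := ∏ x : V, if η x then p else 1 - p

/-- Expectation under the Bernoulli(p) product measure μ. -/
def mean (p : ℝ) (f : (V → Bool) → ℝ) : ℝ := ∑ η : V → Bool, wt p η * f η

/-- Probability of an event under the Bernoulli(p) product measure μ. -/
def probEv (p : ℝ) (E : (V → Bool) → Prop) : ℝ := mean p (fun η => if E η then 1 else 0)

/-- Conditional expectation `μ_A(f)` of `f` given the coordinates outside `A`. -/
def cexp (p : ℝ) (A : Finset V) (f : (V → Bool) → ℝ) (η : V → Bool) : ℝ :=
  ∑ ζ : V → Bool,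
    (∏ x : V, if x ∈ A then (if ζ x then p else 1 - p) else (if ζ x = η x then 1 else 0)) * f ζ

/-- Conditional variance `Var_A(f)` on the coordinates of `A` given the remaining coordinates. -/
def cvar (p : ℝ) (A : Finset V) (f : (V → Bool) → ℝ) (η : V → Bool) : ℝ :=
  cexp p A (fun ζ => f ζ ^ 2) η - (cexp p A f η) ^ 2

/-- Variance `Var_μ(f)` under the Bernoulli(p) product measure. -/
def varTot (p : ℝ) (f : (V → Bool) → ℝ) : ℝ := mean p (fun η => f η ^ 2) - (mean p f) ^ 2

end Bernoulli

/-- Vertices of the rooted `k`-ary tree of depth `n`: words of length `≤ n` over `Fin k`. -/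
abbrev TV (k n : ℕ) := Σ m : Fin (n + 1), Fin m.val → Fin k

/-- The root: the empty word. -/
def rootT (k n : ℕ) : TV k n := ⟨⟨0, Nat.succ_pos n⟩, Fin.elim0⟩

/-- `y` is a child of `x` in the rooted tree. -/
def childOf {k n : ℕ} (x y : TV k n) : Prop :=
  ∃ h : y.1.val = x.1.val + 1, ∀ i : Fin x.1.val, y.2 (Fin.cast h.symm i.castSucc) = x.2 i

/-- The oriented bootstrap map `B̄`: a vertex becomes empty iff it is already empty or
at least `j` of its children are empty. -/
def bootO {k n : ℕ} (j : ℕ) (η : TV k n → Bool) : TV k n → Bool := fun x =>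
  if η x = false ∨ j ≤ (Finset.univ.filter fun y : TV k n => childOf x y ∧ η y = false).card
  then false else true

/-- The oriented FA-jf constraint with unconstrained leaves: `c̄_x(η) = 1` iff `x` is a leaf
(depth `n`) or at least `j` children of `x` are empty. -/
def cbar {k n : ℕ} (j : ℕ) (x : TV k n) (η : TV k n → Bool) : ℝ :=
  if x.1.val = n then 1
  else if j ≤ (Finset.univ.filter fun y : TV k n => childOf x y ∧ η y = false).card then 1 else 0

/-- The Dirichlet form of the oriented FA-jf model on the depth-`L` rooted `k`-ary tree. -/
def dirO (k j L : ℕ) (p : ℝ) (f : (TV k L → Bool) → ℝ) : ℝ :=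
  ∑ x : TV k L, mean p (fun η => cbar j x η * cvar p {x} f η)

/-- The spectral gap of the oriented FA-jf model on the depth-`L` rooted `k`-ary tree:
the infimum over nonconstant `f` of `D_L(f)/Var_μ(f)`. -/
def gapO (k j L : ℕ) (p : ℝ) : ℝ :=
  sInf {r : ℝ | ∃ f : (TV k L → Bool) → ℝ, varTot p f ≠ 0 ∧ r = dirO k j L p f / varTot p f}

/-!
By Efron–Stein, `Var_μ f ≤ ∑ₓ μ(Var_x f)`. At a leaf the constraint is void, so `μ(Var_x f)` is a
term of the Dirichlet form. At an inner vertex `x`, a canonical path empties the first `j` children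
of `x`, flips `x` (whose constraint then holds) and refills the children; since emptying a site
changes `μ` by a factor at most `1 / (p (1 - p))`, this bounds `μ(Var_x f)` by a constant times the
constrained term at `x` plus `∑ μ(Var_y f)` over those children. Recursing from the leaves gives
`μ(Var_x f) ≤ K ^ (L - |x|) D_L(f)`, and there are at most `(2 (k + 1)) ^ L` vertices.
-/

open Finset Function

section ProductMeasure

variable {V : Type*} [Fintype V] {p : ℝ}

theorem bernoulli_nonneg (hp : p ∈ Set.Icc (0 : ℝ) 1) (b : Bool) :
    0 ≤ if b then p else 1 - p := by
  cases b <;> simp [hp.1, hp.2]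

theorem wt_nonneg (hp : p ∈ Set.Icc (0 : ℝ) 1) (η : V → Bool) : 0 ≤ wt p η :=
  prod_nonneg fun x _ => bernoulli_nonneg hp (η x)

variable [DecidableEq V]

theorem sum_prod_apply_bool (g : V → Bool → ℝ) :
    ∑ ζ : V → Bool, ∏ x, g x (ζ x) = ∏ x, (g x true + g x false) := by
  simp [← Fintype.prod_sum]

theorem sum_wt : ∑ η : V → Bool, wt p η = 1 := by
  simp [wt, sum_prod_apply_bool (fun _ b => if b then p else 1 - p)]

theorem mean_nonneg (hp : p ∈ Set.Icc (0 : ℝ) 1) {f : (V → Bool) → ℝ} (hf : ∀ η, 0 ≤ f η) :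
    0 ≤ mean p f :=
  sum_nonneg fun η _ => mul_nonneg (wt_nonneg hp η) (hf η)

theorem mean_mono (hp : p ∈ Set.Icc (0 : ℝ) 1) {f g : (V → Bool) → ℝ} (hfg : ∀ η, f η ≤ g η) :
    mean p f ≤ mean p g :=
  sum_le_sum fun η _ => mul_le_mul_of_nonneg_left (hfg η) (wt_nonneg hp η)

theorem mean_const (c : ℝ) : mean p (fun _ : V → Bool => c) = c := by
  rw [mean, ← sum_mul, sum_wt, one_mul]

theorem mean_add (f g : (V → Bool) → ℝ) :
    mean p (fun η => f η + g η) = mean p f + mean p g := by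
  simp [mean, mul_add, sum_add_distrib]

theorem mean_sub (f g : (V → Bool) → ℝ) :
    mean p (fun η => f η - g η) = mean p f - mean p g := by
  simp [mean, mul_sub, sum_sub_distrib]

theorem mean_const_mul (c : ℝ) (f : (V → Bool) → ℝ) :
    mean p (fun η => c * f η) = c * mean p f := by
  simp only [mean, mul_sum]
  exact sum_congr rfl fun η _ => by ring

def condKernel (p : ℝ) (A : Finset V) (η ζ : V → Bool) : ℝ :=
  ∏ x : V, if x ∈ A then (if ζ x then p else 1 - p) else (if ζ x = η x then 1 else 0)

theorem cexp_eq_sum_condKernel (A : Finset V) (f : (V → Bool) → ℝ) (η : V → Bool) :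
    cexp p A f η = ∑ ζ, condKernel p A η ζ * f ζ := rfl

theorem condKernel_nonneg (hp : p ∈ Set.Icc (0 : ℝ) 1) (A : Finset V) (η ζ : V → Bool) :
    0 ≤ condKernel p A η ζ :=
  prod_nonneg fun x _ => by split_ifs <;> linarith [hp.1, hp.2]

theorem sum_condKernel (A : Finset V) (η : V → Bool) : ∑ ζ, condKernel p A η ζ = 1 := by
  simp only [condKernel]
  rw [sum_prod_apply_bool fun x b =>
    if x ∈ A then (if b then p else 1 - p) else (if b = η x then 1 else 0)]
  refine prod_eq_one fun x _ => ?_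
  split_ifs <;> cases η x <;> simp_all

theorem sum_wt_mul_condKernel (A : Finset V) (ζ : V → Bool) :
    ∑ η, wt p η * condKernel p A η ζ = wt p ζ := by
  simp only [wt, condKernel, ← prod_mul_distrib]
  rw [sum_prod_apply_bool fun x b => (if b then p else 1 - p) *
    if x ∈ A then (if ζ x then p else 1 - p) else (if ζ x = b then 1 else 0)]
  refine prod_congr rfl fun x _ => ?_
  split_ifs <;> cases ζ x <;> simp_all <;> ring

theorem mean_cexp (A : Finset V) (f : (V → Bool) → ℝ) : mean p (cexp p A f) = mean p f := by
  simp only [mean, cexp_eq_sum_condKernel, mul_sum]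
  rw [sum_comm]
  refine sum_congr rfl fun ζ _ => ?_
  simp only [← mul_assoc, ← sum_mul, sum_wt_mul_condKernel]

end ProductMeasure

theorem sq_sub_le_three_mul (a b a' b' : ℝ) :
    (a - b) ^ 2 ≤ 3 * (a - a') ^ 2 + 3 * (b - b') ^ 2 + 3 * (a' - b') ^ 2 := by
  nlinarith [sq_nonneg (a - a' - (a' - b')), sq_nonneg (a - a' - (b' - b)),
    sq_nonneg (a' - b' - (b' - b))]

theorem one_le_inv_mul_one_sub {p : ℝ} (hp : p ∈ Set.Ioo (0 : ℝ) 1) : 1 ≤ (p * (1 - p))⁻¹ :=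
  (one_le_inv₀ (mul_pos hp.1 (sub_pos.2 hp.2))).2 (by nlinarith [hp.1, hp.2])

section ConditionalExpectation

variable {V : Type*} [Fintype V] [DecidableEq V] {p : ℝ}

theorem condKernel_insert {x : V} {B : Finset V} (hx : x ∉ B) (η ζ : V → Bool) :
    condKernel p (insert x B) η ζ =
      p * condKernel p B (update η x true) ζ + (1 - p) * condKernel p B (update η x false) ζ := by
  simp only [condKernel, ← mul_prod_erase univ _ (mem_univ x)]
  have off_x : ∀ c, ∏ v ∈ univ.erase x,
      (if v ∈ B then (if ζ v then p else 1 - p) else (if ζ v = update η x c v then 1 else 0)) =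
      ∏ v ∈ univ.erase x,
      (if v ∈ insert x B then (if ζ v then p else 1 - p) else (if ζ v = η v then 1 else 0)) :=
    fun c => prod_congr rfl fun v hv => by simp [ne_of_mem_erase hv]
  rw [off_x, off_x]
  cases ζ x <;> simp [hx]

theorem cexp_insert {x : V} {B : Finset V} (hx : x ∉ B) (f : (V → Bool) → ℝ) (η : V → Bool) :
    cexp p (insert x B) f η =
      p * cexp p B f (update η x true) + (1 - p) * cexp p B f (update η x false) := by
  simp only [cexp_eq_sum_condKernel, condKernel_insert hx, add_mul, mul_assoc, sum_add_distrib,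
    ← mul_sum]

theorem cexp_empty (f : (V → Bool) → ℝ) (η : V → Bool) : cexp p ∅ f η = f η := by
  simp [cexp_eq_sum_condKernel, condKernel, prod_boole, ← funext_iff]

theorem cexp_singleton (x : V) (f : (V → Bool) → ℝ) (η : V → Bool) :
    cexp p {x} f η = p * f (update η x true) + (1 - p) * f (update η x false) := by
  rw [← insert_empty, cexp_insert (notMem_empty x), cexp_empty, cexp_empty]

theorem cexp_univ (f : (V → Bool) → ℝ) (η : V → Bool) : cexp p univ f η = mean p f := by
  simp [cexp_eq_sum_condKernel, condKernel, mean, wt]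

theorem cexp_update_comm {x : V} {B : Finset V} (hx : x ∉ B) (c : Bool)
    (f : (V → Bool) → ℝ) (η : V → Bool) :
    cexp p B f (update η x c) = cexp p B (fun ζ => f (update ζ x c)) η := by
  induction B using Finset.induction_on generalizing η with
  | empty => simp [cexp_empty]
  | insert y B hy ih =>
    have hxy : x ≠ y := fun h => hx (h ▸ mem_insert_self y B)
    have hxB : x ∉ B := fun h => hx (mem_insert_of_mem h)
    simp only [cexp_insert hy, update_comm hxy, ih hxB]

theorem cexp_sub (A : Finset V) (f g : (V → Bool) → ℝ) (η : V → Bool) :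
    cexp p A (f - g) η = cexp p A f η - cexp p A g η := by
  simp [cexp_eq_sum_condKernel, mul_sub, sum_sub_distrib]

theorem cexp_const_mul (A : Finset V) (c : ℝ) (f : (V → Bool) → ℝ) (η : V → Bool) :
    cexp p A (fun ζ => c * f ζ) η = c * cexp p A f η := by
  simp only [cexp_eq_sum_condKernel, mul_sum]
  exact sum_congr rfl fun ζ _ => by ring

theorem sq_cexp_le (hp : p ∈ Set.Icc (0 : ℝ) 1) (A : Finset V) (f : (V → Bool) → ℝ)
    (η : V → Bool) : cexp p A f η ^ 2 ≤ cexp p A (fun ζ => f ζ ^ 2) η := by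
  simpa [cexp_eq_sum_condKernel] using (even_two.convexOn_pow (𝕜 := ℝ)).map_sum_le
    (fun ζ _ => condKernel_nonneg hp A η ζ) (sum_condKernel A η) (fun ζ _ => Set.mem_univ (f ζ))

theorem cvar_nonneg (hp : p ∈ Set.Icc (0 : ℝ) 1) (A : Finset V) (f : (V → Bool) → ℝ)
    (η : V → Bool) : 0 ≤ cvar p A f η :=
  sub_nonneg.2 (sq_cexp_le hp A f η)

theorem cvar_univ (f : (V → Bool) → ℝ) (η : V → Bool) : cvar p univ f η = varTot p f := by
  rw [cvar, cexp_univ, cexp_univ, varTot]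

theorem varTot_nonneg (hp : p ∈ Set.Icc (0 : ℝ) 1) (f : (V → Bool) → ℝ) : 0 ≤ varTot p f :=
  cvar_univ (p := p) f (fun _ => false) ▸ cvar_nonneg hp univ f _

theorem mean_cvar (A : Finset V) (f : (V → Bool) → ℝ) :
    mean p (cvar p A f) = mean p (fun η => f η ^ 2) - mean p (fun η => cexp p A f η ^ 2) := by
  rw [← mean_cexp A (fun η => f η ^ 2), ← mean_sub]
  rfl

theorem varTot_indicator (v : V) :
    varTot p (fun η : V → Bool => if η v then 1 else 0) = p * (1 - p) := by
  set f : (V → Bool) → ℝ := fun η => if η v then 1 else 0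
  have hsq : (fun η => f η ^ 2) = f := funext fun η => by by_cases h : η v <;> simp [f, h]
  have hcexp : cexp p {v} f = fun _ => p := funext fun η => by simp [cexp_singleton, f]
  have hmean : mean p f = p := by rw [← mean_cexp {v}, hcexp, mean_const]
  rw [varTot, hsq, hmean]
  ring

end ConditionalExpectation

section Configurations

variable {V : Type*} [DecidableEq V] {p : ℝ}

def siteDiff (x : V) (f : (V → Bool) → ℝ) (η : V → Bool) : ℝ :=
  f (update η x true) - f (update η x false)

theorem sq_sub_update_false_le (g : (V → Bool) → ℝ) (η : V → Bool) (y : V) :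
    (g η - g (update η y false)) ^ 2 ≤ siteDiff y g η ^ 2 := by
  rw [siteDiff]
  cases hb : η y
  · rw [← hb, update_eq_self]
    simp [sq_nonneg]
  · rw [← hb, update_eq_self]

theorem siteDiff_comp_update {x y : V} (hxy : x ≠ y) (b : Bool) (f : (V → Bool) → ℝ)
    (η : V → Bool) : siteDiff y (fun ζ => f (update ζ x b)) η = siteDiff y f (update η x b) := by
  simp only [siteDiff, update_comm hxy]

def emptyOn (S : Finset V) (η : V → Bool) : V → Bool := S.piecewise (fun _ => false) η

theorem emptyOn_insert (y : V) (S : Finset V) (η : V → Bool) :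
    emptyOn (insert y S) η = update (emptyOn S η) y false :=
  piecewise_insert S _ η y

variable [Fintype V]

theorem cvar_singleton (x : V) (f : (V → Bool) → ℝ) (η : V → Bool) :
    cvar p {x} f η = p * (1 - p) * siteDiff x f η ^ 2 := by
  rw [cvar, cexp_singleton, cexp_singleton, siteDiff]
  ring

theorem siteDiff_cexp {x : V} {B : Finset V} (hx : x ∉ B) (f : (V → Bool) → ℝ) (η : V → Bool) :
    siteDiff x (cexp p B f) η = cexp p B (siteDiff x f) η := by
  rw [siteDiff, cexp_update_comm hx, cexp_update_comm hx, ← cexp_sub]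
  rfl

theorem cvar_singleton_cexp_le (hp : p ∈ Set.Icc (0 : ℝ) 1) {x : V} {B : Finset V} (hx : x ∉ B)
    (f : (V → Bool) → ℝ) (η : V → Bool) :
    cvar p {x} (cexp p B f) η ≤ cexp p B (cvar p {x} f) η := by
  rw [show cvar p {x} f = fun ζ => p * (1 - p) * siteDiff x f ζ ^ 2 from
    funext (cvar_singleton x f), cexp_const_mul, cvar_singleton, siteDiff_cexp hx]
  exact mul_le_mul_of_nonneg_left (sq_cexp_le hp B _ η) (mul_nonneg hp.1 (sub_nonneg.2 hp.2))

theorem mean_cvar_insert_le (hp : p ∈ Set.Icc (0 : ℝ) 1) {x : V} {B : Finset V} (hx : x ∉ B)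
    (f : (V → Bool) → ℝ) :
    mean p (cvar p (insert x B) f) ≤ mean p (cvar p {x} f) + mean p (cvar p B f) := by
  have tower : cexp p {x} (cexp p B f) = cexp p (insert x B) f :=
    funext fun η => by rw [cexp_singleton, cexp_insert hx]
  have smoothing : mean p (cvar p {x} (cexp p B f)) ≤ mean p (cvar p {x} f) :=
    (mean_mono hp (cvar_singleton_cexp_le hp hx f)).trans_eq (mean_cexp B _)
  simp only [mean_cvar, tower] at smoothing ⊢
  linarith

theorem mean_cvar_le_sum (hp : p ∈ Set.Icc (0 : ℝ) 1) (f : (V → Bool) → ℝ) (A : Finset V) :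
    mean p (cvar p A f) ≤ ∑ x ∈ A, mean p (cvar p {x} f) := by
  induction A using Finset.induction_on with
  | empty =>
    have : cvar p ∅ f = fun _ => 0 := funext fun η => by simp [cvar, cexp_empty]
    simp [this, mean_const]
  | insert x B hx ih =>
    rw [sum_insert hx]
    linarith [mean_cvar_insert_le hp hx f]

theorem varTot_le_sum_mean_cvar (hp : p ∈ Set.Icc (0 : ℝ) 1) (f : (V → Bool) → ℝ) :
    varTot p f ≤ ∑ x, mean p (cvar p {x} f) := by
  have : cvar p univ f = fun _ => varTot p f := funext (cvar_univ f)
  simpa [this, mean_const] using mean_cvar_le_sum hp f univ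

theorem mean_comp_update_le (hp : p ∈ Set.Ioo (0 : ℝ) 1) (x : V) (b : Bool)
    {h : (V → Bool) → ℝ} (hh : ∀ η, 0 ≤ h η) :
    mean p (fun η => h (update η x b)) ≤ (p * (1 - p))⁻¹ * mean p h := by
  have hq : 0 < p * (1 - p) := mul_pos hp.1 (sub_pos.2 hp.2)
  have pointwise : ∀ η, h (update η x b) ≤ (p * (1 - p))⁻¹ * cexp p {x} h η := by
    intro η
    rw [le_inv_mul_iff₀ hq, cexp_singleton]
    have h₁ := hh (update η x true)
    have h₀ := hh (update η x false)
    have hp₀ := hp.1.le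
    have hp₁ := sub_nonneg.2 hp.2.le
    cases b <;> nlinarith [mul_nonneg hp₀ h₁, mul_nonneg hp₁ h₀, mul_nonneg (mul_nonneg hp₀ hp₀) h₁,
      mul_nonneg (mul_nonneg hp₁ hp₁) h₀]
  calc _ ≤ mean p (fun η => (p * (1 - p))⁻¹ * cexp p {x} h η) :=
        mean_mono (Set.Ioo_subset_Icc_self hp) pointwise
    _ = _ := by rw [mean_const_mul, mean_cexp]

theorem mean_comp_emptyOn_le (hp : p ∈ Set.Ioo (0 : ℝ) 1) (S : Finset V)
    {h : (V → Bool) → ℝ} (hh : ∀ η, 0 ≤ h η) :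
    mean p (fun η => h (emptyOn S η)) ≤ (p * (1 - p))⁻¹ ^ #S * mean p h := by
  induction S using Finset.induction_on generalizing h with
  | empty => simp [emptyOn]
  | insert y S hy ih =>
    have hq : 0 < p * (1 - p) := mul_pos hp.1 (sub_pos.2 hp.2)
    simp only [emptyOn_insert, card_insert_of_notMem hy, pow_succ, mul_assoc]
    exact (ih fun η => hh _).trans
      (mul_le_mul_of_nonneg_left (mean_comp_update_le hp y false hh) (by positivity))

theorem mean_sq_sub_comp_emptyOn_le (hp : p ∈ Set.Ioo (0 : ℝ) 1) (g : (V → Bool) → ℝ)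
    (S : Finset V) :
    mean p (fun η => (g η - g (emptyOn S η)) ^ 2) ≤
      (2 * (p * (1 - p))⁻¹) ^ #S * ∑ y ∈ S, mean p (fun η => siteDiff y g η ^ 2) := by
  have hp' := Set.Ioo_subset_Icc_self hp
  induction S using Finset.induction_on with
  | empty => simp [emptyOn, mean_const]
  | insert y S hy ih =>
    set M := (p * (1 - p))⁻¹
    have hM1 : 1 ≤ M := one_le_inv_mul_one_sub hp
    set T := ∑ z ∈ S, mean p (fun η => siteDiff z g η ^ 2)
    set D := mean p (fun η => siteDiff y g η ^ 2)
    have hT : 0 ≤ T := sum_nonneg fun z _ => mean_nonneg hp' fun η => sq_nonneg _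
    have hD : 0 ≤ D := mean_nonneg hp' fun η => sq_nonneg _
    have last_step : mean p (fun η => (g (emptyOn S η) - g (update (emptyOn S η) y false)) ^ 2)
        ≤ M ^ #S * D :=
      (mean_comp_emptyOn_le hp S (h := fun ζ => (g ζ - g (update ζ y false)) ^ 2)
        fun _ => sq_nonneg _).trans
        (mul_le_mul_of_nonneg_left (mean_mono hp' fun η => sq_sub_update_false_le g η y)
          (by positivity))
    have split : ∀ η, (g η - g (emptyOn (insert y S) η)) ^ 2 ≤
        2 * (g η - g (emptyOn S η)) ^ 2 +
          2 * (g (emptyOn S η) - g (update (emptyOn S η) y false)) ^ 2 := fun η => by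
      rw [emptyOn_insert]
      nlinarith [sq_nonneg (g η - 2 * g (emptyOn S η) + g (update (emptyOn S η) y false))]
    have h2M : 2 * (2 * M) ^ #S ≤ (2 * M) ^ (#S + 1) := by
      rw [pow_succ]; nlinarith [pow_nonneg (by positivity : (0 : ℝ) ≤ 2 * M) #S]
    have hMS : 2 * M ^ #S ≤ (2 * M) ^ (#S + 1) :=
      le_trans (by gcongr; linarith) h2M
    calc _ ≤ 2 * mean p (fun η => (g η - g (emptyOn S η)) ^ 2) +
          2 * mean p (fun η => (g (emptyOn S η) - g (update (emptyOn S η) y false)) ^ 2) := by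
          rw [← mean_const_mul, ← mean_const_mul, ← mean_add]
          exact mean_mono hp' split
      _ ≤ 2 * ((2 * M) ^ #S * T) + 2 * (M ^ #S * D) := by gcongr
      _ ≤ (2 * M) ^ (#S + 1) * (D + T) := by
          nlinarith [mul_le_mul_of_nonneg_right h2M hT, mul_le_mul_of_nonneg_right hMS hD]
      _ = _ := by rw [sum_insert hy, card_insert_of_notMem hy]

theorem sum_mean_siteDiff_sq_comp_update_le (hp : p ∈ Set.Ioo (0 : ℝ) 1) {x : V}
    {S : Finset V} (hx : x ∉ S) (b : Bool) (f : (V → Bool) → ℝ) :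
    ∑ y ∈ S, mean p (fun η => siteDiff y (fun ζ => f (update ζ x b)) η ^ 2) ≤
      (p * (1 - p))⁻¹ * ∑ y ∈ S, mean p (fun η => siteDiff y f η ^ 2) := by
  rw [mul_sum]
  refine sum_le_sum fun y hy => ?_
  simp only [siteDiff_comp_update (ne_of_mem_of_not_mem hy hx).symm]
  exact mean_comp_update_le hp x b fun _ => sq_nonneg _

def pathConst (p : ℝ) (n : ℕ) : ℝ := 6 * (2 * (p * (1 - p))⁻¹) ^ (n + 1)

theorem one_le_pathConst (hp : p ∈ Set.Ioo (0 : ℝ) 1) (n : ℕ) : 1 ≤ pathConst p n := by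
  have : 1 ≤ (2 * (p * (1 - p))⁻¹) ^ (n + 1) :=
    one_le_pow₀ (by linarith [one_le_inv_mul_one_sub hp])
  unfold pathConst
  linarith

theorem mean_siteDiff_sq_le_of_emptyOn (hp : p ∈ Set.Ioo (0 : ℝ) 1) {x : V} {S : Finset V}
    (hx : x ∉ S) {c : (V → Bool) → ℝ} (hc₀ : ∀ η, 0 ≤ c η) (hc : ∀ η, c (emptyOn S η) = 1)
    (f : (V → Bool) → ℝ) :
    mean p (fun η => siteDiff x f η ^ 2) ≤ pathConst p #S *
      (mean p (fun η => c η * siteDiff x f η ^ 2) +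
        ∑ y ∈ S, mean p (fun η => siteDiff y f η ^ 2)) := by
  have hp' := Set.Ioo_subset_Icc_self hp
  set M := (p * (1 - p))⁻¹
  have hM1 : 1 ≤ M := one_le_inv_mul_one_sub hp
  set g : Bool → (V → Bool) → ℝ := fun b ζ => f (update ζ x b)
  set T := ∑ y ∈ S, mean p (fun η => siteDiff y f η ^ 2)
  set G := mean p (fun η => c η * siteDiff x f η ^ 2)
  have hT : 0 ≤ T := sum_nonneg fun z _ => mean_nonneg hp' fun η => sq_nonneg _
  have hG : 0 ≤ G := mean_nonneg hp' fun η => mul_nonneg (hc₀ η) (sq_nonneg _)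
  have pointwise : ∀ η, siteDiff x f η ^ 2 ≤
      3 * (g true η - g true (emptyOn S η)) ^ 2 + 3 * (g false η - g false (emptyOn S η)) ^ 2 +
        3 * (c (emptyOn S η) * siteDiff x f (emptyOn S η) ^ 2) := fun η => by
    rw [hc, one_mul]
    exact sq_sub_le_three_mul _ _ _ _
  have path : ∀ b, mean p (fun η => (g b η - g b (emptyOn S η)) ^ 2) ≤ (2 * M) ^ #S * (M * T) :=
    fun b => (mean_sq_sub_comp_emptyOn_le hp (g b) S).trans (by
      gcongr
      exact sum_mean_siteDiff_sq_comp_update_le hp hx b f)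
  have at_emptied : mean p (fun η => c (emptyOn S η) * siteDiff x f (emptyOn S η) ^ 2) ≤
      M ^ #S * G :=
    mean_comp_emptyOn_le hp S fun η => mul_nonneg (hc₀ η) (sq_nonneg _)
  have coeff_T : (2 * M) ^ #S * M ≤ (2 * M) ^ (#S + 1) := by
    rw [pow_succ]
    gcongr
    linarith
  have coeff_G : M ^ #S ≤ 2 * (2 * M) ^ (#S + 1) :=
    calc M ^ #S ≤ (2 * M) ^ #S := by gcongr; linarith
      _ ≤ (2 * M) ^ (#S + 1) := pow_le_pow_right₀ (by linarith) (Nat.le_succ _)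
      _ ≤ 2 * (2 * M) ^ (#S + 1) := by linarith [pow_nonneg (by linarith : 0 ≤ 2 * M) (#S + 1)]
  calc _ ≤ 3 * mean p (fun η => (g true η - g true (emptyOn S η)) ^ 2) +
        3 * mean p (fun η => (g false η - g false (emptyOn S η)) ^ 2) +
        3 * mean p (fun η => c (emptyOn S η) * siteDiff x f (emptyOn S η) ^ 2) := by
        simp only [← mean_const_mul, ← mean_add]
        exact mean_mono hp' pointwise
    _ ≤ 3 * ((2 * M) ^ #S * (M * T)) + 3 * ((2 * M) ^ #S * (M * T)) + 3 * (M ^ #S * G) := by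
        gcongr <;> apply_assumption
    _ ≤ pathConst p #S * (G + T) := by
        rw [pathConst]
        nlinarith [mul_le_mul_of_nonneg_right coeff_T hT, mul_le_mul_of_nonneg_right coeff_G hG]

theorem mean_cvar_le_of_emptyOn (hp : p ∈ Set.Ioo (0 : ℝ) 1) {x : V} {S : Finset V}
    (hx : x ∉ S) {c : (V → Bool) → ℝ} (hc₀ : ∀ η, 0 ≤ c η) (hc : ∀ η, c (emptyOn S η) = 1)
    (f : (V → Bool) → ℝ) :
    mean p (cvar p {x} f) ≤ pathConst p #S *
      (mean p (fun η => c η * cvar p {x} f η) + ∑ y ∈ S, mean p (cvar p {y} f)) := by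
  have hcvar : ∀ z, cvar p {z} f = fun η => p * (1 - p) * siteDiff z f η ^ 2 :=
    fun z => funext (cvar_singleton z f)
  simp only [hcvar, mul_left_comm (c _), mean_const_mul, ← mul_sum, ← mul_add]
  rw [mul_left_comm]
  exact mul_le_mul_of_nonneg_left (mean_siteDiff_sq_le_of_emptyOn hp hx hc₀ hc f)
    (mul_pos hp.1 (sub_pos.2 hp.2)).le

end Configurations

section Tree

variable {k j L : ℕ}

def treeChild (x : TV k L) (hx : x.1.val < L) (m : Fin k) : TV k L :=
  ⟨⟨x.1.val + 1, by omega⟩, Fin.snoc x.2 m⟩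

theorem childOf_treeChild (x : TV k L) (hx : x.1.val < L) (m : Fin k) :
    childOf x (treeChild x hx m) :=
  ⟨rfl, fun i => by simp [treeChild]⟩

theorem treeChild_injective (x : TV k L) (hx : x.1.val < L) : Injective (treeChild x hx) := by
  intro m m' h
  have h' : (Fin.snoc x.2 m : Fin (x.1.val + 1) → Fin k) = Fin.snoc x.2 m' :=
    eq_of_heq (Sigma.mk.inj h).2
  simpa using congrFun h' (Fin.last _)

def firstChildren (hjk : j ≤ k) (x : TV k L) (hx : x.1.val < L) : Finset (TV k L) :=
  univ.map ((Fin.castLEEmb hjk).trans ⟨treeChild x hx, treeChild_injective x hx⟩)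

theorem card_firstChildren (hjk : j ≤ k) (x : TV k L) (hx : x.1.val < L) :
    #(firstChildren hjk x hx) = j := by
  simp [firstChildren]

theorem depth_of_mem_firstChildren {hjk : j ≤ k} {x : TV k L} {hx : x.1.val < L} {y : TV k L}
    (hy : y ∈ firstChildren hjk x hx) : y.1.val = x.1.val + 1 := by
  obtain ⟨m, -, rfl⟩ := mem_map.1 hy
  rfl

theorem notMem_firstChildren (hjk : j ≤ k) (x : TV k L) (hx : x.1.val < L) :
    x ∉ firstChildren hjk x hx :=
  fun h => by simpa using depth_of_mem_firstChildren h

theorem cbar_nonneg (x : TV k L) (η : TV k L → Bool) : 0 ≤ cbar j x η := by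
  unfold cbar
  split_ifs <;> norm_num

theorem cbar_emptyOn_firstChildren (hjk : j ≤ k) (x : TV k L) (hx : x.1.val < L)
    (η : TV k L → Bool) : cbar j x (emptyOn (firstChildren hjk x hx) η) = 1 := by
  rw [cbar, if_neg hx.ne, if_pos]
  calc j = #(firstChildren hjk x hx) := (card_firstChildren hjk x hx).symm
    _ ≤ _ := card_le_card fun y hy => by
      obtain ⟨m, -, rfl⟩ := mem_map.1 hy
      exact mem_filter.2 ⟨mem_univ _, childOf_treeChild x hx _, piecewise_eq_of_mem _ _ _ hy⟩

end Tree

section SpectralGap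

variable {k j L : ℕ} {p : ℝ}

theorem dirO_nonneg (hp : p ∈ Set.Icc (0 : ℝ) 1) (f : (TV k L → Bool) → ℝ) :
    0 ≤ dirO k j L p f :=
  sum_nonneg fun x _ => mean_nonneg hp fun η => mul_nonneg (cbar_nonneg x η) (cvar_nonneg hp _ f η)

theorem mean_cbar_mul_cvar_le_dirO (hp : p ∈ Set.Icc (0 : ℝ) 1) (f : (TV k L → Bool) → ℝ)
    (x : TV k L) : mean p (fun η => cbar j x η * cvar p {x} f η) ≤ dirO k j L p f :=
  single_le_sum (f := fun z => mean p (fun η => cbar j z η * cvar p {z} f η))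
    (fun z _ => mean_nonneg hp fun η => mul_nonneg (cbar_nonneg z η) (cvar_nonneg hp _ f η))
    (mem_univ x)

def treeConst (p : ℝ) (j : ℕ) : ℝ := pathConst p j * (j + 1)

theorem one_le_treeConst (hp : p ∈ Set.Ioo (0 : ℝ) 1) (j : ℕ) : 1 ≤ treeConst p j :=
  one_le_mul_of_one_le_of_one_le (one_le_pathConst hp j)
    (le_add_of_nonneg_left j.cast_nonneg)

theorem mean_cvar_le_treeConst_pow_mul_dirO (hp : p ∈ Set.Ioo (0 : ℝ) 1) (hjk : j ≤ k)
    (f : (TV k L → Bool) → ℝ) (x : TV k L) :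
    mean p (cvar p {x} f) ≤ treeConst p j ^ (L - x.1.val) * dirO k j L p f := by
  have hp' := Set.Ioo_subset_Icc_self hp
  have hD := dirO_nonneg (j := j) hp' f
  obtain ⟨n, hn⟩ : ∃ n, L - x.1.val = n := ⟨_, rfl⟩
  induction n generalizing x with
  | zero =>
    have hleaf : x.1.val = L := by have := x.1.isLt; omega
    simpa [hn, cbar, hleaf] using mean_cbar_mul_cvar_le_dirO (j := j) hp' f x
  | succ n ih =>
    have hx : x.1.val < L := by omega
    set F := firstChildren hjk x hx
    have children : ∑ y ∈ F, mean p (cvar p {y} f) ≤ j * (treeConst p j ^ n * dirO k j L p f) := by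
      have hyn : ∀ y ∈ F, L - y.1.val = n := fun y hy => by
        rw [depth_of_mem_firstChildren hy]; omega
      simpa [card_firstChildren, F] using sum_le_card_nsmul F _ _ fun y hy =>
        (ih y (hyn y hy)).trans_eq (by rw [hyn y hy])
    have hK := one_le_pow₀ (n := n) (one_le_treeConst hp j)
    calc mean p (cvar p {x} f)
        ≤ pathConst p #F *
            (mean p (fun η => cbar j x η * cvar p {x} f η) + ∑ y ∈ F, mean p (cvar p {y} f)) :=
          mean_cvar_le_of_emptyOn hp (notMem_firstChildren hjk x hx) (cbar_nonneg x)
            (cbar_emptyOn_firstChildren hjk x hx) f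
      _ ≤ pathConst p j *
            (treeConst p j ^ n * dirO k j L p f + j * (treeConst p j ^ n * dirO k j L p f)) := by
          rw [card_firstChildren]
          refine mul_le_mul_of_nonneg_left (add_le_add ?_ children)
            (zero_le_one.trans (one_le_pathConst hp j))
          exact (mean_cbar_mul_cvar_le_dirO hp' f x).trans (le_mul_of_one_le_left hD hK)
      _ = treeConst p j ^ (L - x.1.val) * dirO k j L p f := by
          rw [hn, treeConst]
          ring

theorem card_TV_le (k L : ℕ) : Fintype.card (TV k L) ≤ (2 * (k + 1)) ^ L := by
  rw [Fintype.card_sigma, mul_pow]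
  calc ∑ m : Fin (L + 1), Fintype.card (Fin m.val → Fin k)
      ≤ ∑ _m : Fin (L + 1), (k + 1) ^ L := sum_le_sum fun m _ => by
        simpa using (Nat.pow_le_pow_left k.le_succ m).trans
          (Nat.pow_le_pow_right k.succ_pos (by omega))
    _ ≤ 2 ^ L * (k + 1) ^ L := by
        rw [sum_const, card_univ, Fintype.card_fin, smul_eq_mul]
        exact Nat.mul_le_mul_right _ Nat.lt_two_pow_self

theorem varTot_le_dirO (hp : p ∈ Set.Ioo (0 : ℝ) 1) (hjk : j ≤ k) (f : (TV k L → Bool) → ℝ) :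
    varTot p f ≤ (2 * (k + 1) * treeConst p j) ^ L * dirO k j L p f := by
  have hp' := Set.Ioo_subset_Icc_self hp
  have hK := one_le_treeConst hp j
  calc varTot p f ≤ ∑ x : TV k L, mean p (cvar p {x} f) := varTot_le_sum_mean_cvar hp' f
    _ ≤ ∑ _x : TV k L, treeConst p j ^ L * dirO k j L p f := sum_le_sum fun x _ =>
        (mean_cvar_le_treeConst_pow_mul_dirO hp hjk f x).trans
          (mul_le_mul_of_nonneg_right (pow_le_pow_right₀ hK (Nat.sub_le _ _)) (dirO_nonneg hp' f))
    _ ≤ (2 * (k + 1) * treeConst p j) ^ L * dirO k j L p f := by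
        rw [sum_const, card_univ, nsmul_eq_mul, mul_pow, ← mul_assoc]
        gcongr
        · exact dirO_nonneg hp' f
        · exact_mod_cast card_TV_le k L

theorem inv_le_gapO (hp : p ∈ Set.Ioo (0 : ℝ) 1) {A : ℝ} (hA : 0 < A)
    (h : ∀ f, varTot p f ≤ A * dirO k j L p f) : A⁻¹ ≤ gapO k j L p := by
  refine le_csInf ⟨_, fun η => if η (rootT k L) then 1 else 0, ?_, rfl⟩ ?_
  · rw [varTot_indicator (rootT k L)]
    exact (mul_pos hp.1 (sub_pos.2 hp.2)).ne'
  · rintro r ⟨f, hf, rfl⟩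
    have hvar := lt_of_le_of_ne (varTot_nonneg (Set.Ioo_subset_Icc_self hp) f) (Ne.symm hf)
    rw [le_div_iff₀ hvar, inv_mul_le_iff₀ hA]
    exact h f

end SpectralGap

theorem gap_lower_bound_general (k j : ℕ) (p : ℝ) (hjk : j ≤ k)
    (hp : p ∈ Set.Ioo (0 : ℝ) 1) :
    ∃ c > (0 : ℝ), ∀ L : ℕ, 1 ≤ L → Real.exp (-(c * L)) ≤ gapO k j L p := by
  set A := 2 * (k + 1) * treeConst p j
  have hA : 1 < A := by
    have := one_le_treeConst hp j
    have := k.cast_nonneg (α := ℝ)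
    unfold A
    nlinarith
  refine ⟨Real.log A, Real.log_pos hA, fun L _ => ?_⟩
  rw [Real.exp_neg, mul_comm, Real.exp_nat_mul, Real.exp_log (by linarith)]
  exact inv_le_gapO hp (by positivity) (varTot_le_dirO hp hjk)

theorem gap_lower_bound (k j : ℕ) (p : ℝ) (hk : 2 ≤ k) (hj : 2 ≤ j) (hjk : j ≤ k)
    (hp : p ∈ Set.Ioo (0 : ℝ) 1) :
    ∃ c > (0 : ℝ), ∀ L : ℕ, 1 ≤ L → Real.exp (-(c * L)) ≤ gapO k j L p :=
  gap_lower_bound_general k j p hjk hp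
end
end
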